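/- The D × D block of the inverse matrix M⁻¹ equals the inverse of the Neumann jump operator: (M⁻¹)_DD = N⁻¹. (The covariance of the trace of the discrete free field on the separator D is the inverse of the Neumann jump operator.) -/

import Mathlib

/-!
Listing `I` as `D, L, R` turns `M` into a `2 × 2` block matrix whose lower-right block, indexed
by `L ⊕ R`, is block diagonal because `M_LR = 0`. The `D × D` block of the inverse of a `2 × 2`
block matrix is the inverse of the Schur complement of the lower-right block, and for a block
diagonal lower-right block that Schur complement is exactly `N`.
-/

open Matrix

/-- The block of a matrix corresponding to two finite index subsets. -/
def finsetBlock {I : Type*} (M : Matrix I I ℝ) (S T : Finset I) : Matrix ↥S ↥T ℝ :=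
  M.submatrix (fun i => (i : I)) (fun j => (j : I))

namespace Matrix

variable {m n p α : Type*} [Fintype n] [DecidableEq n] [CommRing α]

theorem toBlocks₁₁_inv_fromBlocks_of_isUnit [Fintype m] [DecidableEq m]
    {A : Matrix m m α} {B : Matrix m n α} {C : Matrix n m α} {D : Matrix n n α}
    (hD : IsUnit D) (h : IsUnit (fromBlocks A B C D)) :
    (fromBlocks A B C D)⁻¹.toBlocks₁₁ = (A - B * D⁻¹ * C)⁻¹ := by
  let := hD.invertible
  let := h.invertible
  let := invertibleOfFromBlocks₂₂Invertible A B C D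
  rw [← invOf_eq_nonsing_inv, invOf_fromBlocks₂₂_eq, toBlocks_fromBlocks₁₁,
    invOf_eq_nonsing_inv, invOf_eq_nonsing_inv D]

theorem fromCols_mul_inv_fromBlocks_zero_mul_fromRows [Fintype p] [DecidableEq p]
    {P : Matrix n n α} {Q : Matrix p p α} (hPQ : IsUnit P ↔ IsUnit Q)
    (B₁ : Matrix m n α) (B₂ : Matrix m p α) (C₁ : Matrix n m α) (C₂ : Matrix p m α) :
    fromCols B₁ B₂ * (fromBlocks P 0 0 Q)⁻¹ * fromRows C₁ C₂ =
      B₁ * P⁻¹ * C₁ + B₂ * Q⁻¹ * C₂ := by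
  rw [inv_fromBlocks_zero₂₁_of_isUnit_iff P 0 Q hPQ, fromCols_mul_fromBlocks,
    fromCols_mul_fromRows]
  simp

end Matrix

section Partition

variable {I : Type*} [Fintype I] [DecidableEq I] {L D R : Finset I}

def Finset.partitionEquiv (hLD : Disjoint L D) (hLR : Disjoint L R) (hDR : Disjoint D R)
    (hcover : L ∪ D ∪ R = Finset.univ) : ↥D ⊕ (↥L ⊕ ↥R) ≃ I :=
  (Equiv.sumCongr (Equiv.refl D) (Equiv.Finset.union L R hLR)).trans <|
    (Equiv.Finset.union D (L ∪ R) (Finset.disjoint_union_right.mpr ⟨hLD.symm, hDR⟩)).trans <|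
      Equiv.subtypeUnivEquiv fun x => by
        have hx : x ∈ L ∪ D ∪ R := hcover ▸ Finset.mem_univ x
        simp only [Finset.mem_union] at hx ⊢
        tauto

theorem Finset.submatrix_partitionEquiv (hLD : Disjoint L D) (hLR : Disjoint L R)
    (hDR : Disjoint D R) (hcover : L ∪ D ∪ R = Finset.univ) {M : Matrix I I ℝ}
    (hzero : ∀ x y : I, (x ∈ L ∧ y ∈ R) ∨ (x ∈ R ∧ y ∈ L) → M x y = 0) :
    let e := Finset.partitionEquiv hLD hLR hDR hcover
    M.submatrix e e =
      fromBlocks (finsetBlock M D D) (fromCols (finsetBlock M D L) (finsetBlock M D R))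
        (fromRows (finsetBlock M L D) (finsetBlock M R D))
        (fromBlocks (finsetBlock M L L) 0 0 (finsetBlock M R R)) := by
  ext (d | l | r) (d' | l' | r')
  all_goals try rfl
  · exact hzero l r' (.inl ⟨l.2, r'.2⟩)
  · exact hzero r l' (.inr ⟨r.2, l'.2⟩)

end Partition

/-- The `D × D` block of `M⁻¹` is the inverse of the Neumann jump operator
`N = M_DD − M_DL (M_LL)⁻¹ M_LD − M_DR (M_RR)⁻¹ M_RD`. -/
theorem stmt_4 {I : Type*} [Fintype I] [DecidableEq I]
    (L D R : Finset I)
    (hLD : Disjoint L D) (hLR : Disjoint L R) (hDR : Disjoint D R)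
    (hcover : L ∪ D ∪ R = Finset.univ)
    (M : Matrix I I ℝ) (hM : M.PosDef)
    (hzero : ∀ x y : I, (x ∈ L ∧ y ∈ R) ∨ (x ∈ R ∧ y ∈ L) → M x y = 0) :
    finsetBlock M⁻¹ D D =
      (finsetBlock M D D
        - finsetBlock M D L * (finsetBlock M L L)⁻¹ * finsetBlock M L D
        - finsetBlock M D R * (finsetBlock M R R)⁻¹ * finsetBlock M R D)⁻¹ := by
  set e := Finset.partitionEquiv hLD hLR hDR hcover
  have hblocks := Finset.submatrix_partitionEquiv hLD hLR hDR hcover hzero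
  have hLL : IsUnit (finsetBlock M L L) := (hM.submatrix Subtype.val_injective).isUnit
  have hRR : IsUnit (finsetBlock M R R) := (hM.submatrix Subtype.val_injective).isUnit
  have hunit : IsUnit (M.submatrix e e) := (hM.submatrix e.injective).isUnit
  rw [hblocks] at hunit
  have hDD : finsetBlock M⁻¹ D D = (M.submatrix e e)⁻¹.toBlocks₁₁ := by
    rw [inv_submatrix_equiv]
    rfl
  rw [hDD, hblocks,
    toBlocks₁₁_inv_fromBlocks_of_isUnit (isUnit_fromBlocks_zero₂₁.mpr ⟨hLL, hRR⟩) hunit,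
    fromCols_mul_inv_fromBlocks_zero_mul_fromRows (iff_of_true hLL hRR), sub_add_eq_sub_sub]
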